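/- arXiv:0905.3098 — 2 statements merged into one kernel-verified Lean document; each statement's English description precedes it below -/
import Mathlib

section
/- Let (X,T) be a transitive topological dynamical system and d ≥ 1. Suppose that whenever x,y ∈ X satisfy (x, y, y, …, y) ∈ Q^[d](X), one has x = y. Then (X,T) is distal. -/
open Filter Topology

noncomputable section

def dotP {d : ℕ} (n : Fin d → ℤ) (ε : Fin d → Bool) : ℤ :=
  ∑ i, if ε i then n i else 0

def vertex0 (d : ℕ) : Fin d → Bool := fun _ => false

def cubeQ (X : Type*) [TopologicalSpace X] (T : X ≃ₜ X) (d : ℕ) :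
    Set ((Fin d → Bool) → X) :=
  closure {y | ∃ (x : X) (n : Fin d → ℤ), y = fun ε => (T.toEquiv ^ dotP n ε) x}

/-!
If `x` and `y` are proximal, the Ellis–Numakura lemma applied to the compact subsemigroup
`{u ∈ E | u x = u y}` of the enveloping semigroup `E` gives an idempotent `u` with `u x = u y =: z`.
Since `u z = z`, there are times `m` at which `T^m x` and `T^m z` are both close to `z`; iterating
this along the `d` directions of the cube puts `(x, z, …, z)` in `Q^[d]`, and likewise
`(y, z, …, z)`. The hypothesis then gives `x = z = y`.
-/

theorem vertex0_succ (d : ℕ) : vertex0 (d + 1) = Fin.cons false (vertex0 d) := by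
  ext i
  cases i using Fin.cases <;> rfl

@[simp]
theorem dotP_vertex0 {d : ℕ} (n : Fin d → ℤ) : dotP n (vertex0 d) = 0 := by
  simp [dotP, vertex0]

theorem dotP_cons {d : ℕ} (m : ℤ) (n : Fin d → ℤ) (b : Bool) (ε : Fin d → Bool) :
    dotP (Fin.cons m n : Fin (d + 1) → ℤ) (Fin.cons b ε) = (if b then m else 0) + dotP n ε := by
  simp [dotP, Fin.sum_univ_succ]

theorem comp_mem_closure_of_forall_comp_mem {X : Type*} [TopologicalSpace X] {S : Set (X → X)}
    (hcont : ∀ s ∈ S, Continuous s) (hS : ∀ s ∈ S, ∀ t ∈ S, s ∘ t ∈ S) {f g : X → X}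
    (hf : f ∈ closure S) (hg : g ∈ closure S) : f ∘ g ∈ closure S := by
  have hleft : ∀ s ∈ S, s ∘ g ∈ closure S := fun s hs =>
    map_mem_closure (continuous_pi fun p => (hcont s hs).comp (continuous_apply p)) hg
      fun t ht => hS s hs t ht
  rw [← closure_closure (s := S)]
  exact map_mem_closure (f := (· ∘ g)) (continuous_pi fun p => continuous_apply (g p)) hf hleft

namespace Homeomorph

variable {X : Type*} [TopologicalSpace X] (T : X ≃ₜ X)

theorem toEquiv_zpow (n : ℤ) : (T ^ n).toEquiv = T.toEquiv ^ n :=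
  map_zpow ({ toFun := toEquiv, map_one' := rfl, map_mul' := fun _ _ => rfl } :
    (X ≃ₜ X) →* Equiv.Perm X) T n

theorem continuous_toEquiv_zpow (n : ℤ) : Continuous ⇑(T.toEquiv ^ n) := by
  rw [← toEquiv_zpow]
  exact (T ^ n).continuous

def envelopingSemigroup : Set (X → X) :=
  closure (Set.range fun n : ℤ => ⇑(T.toEquiv ^ n))

theorem zpow_mem_envelopingSemigroup (n : ℤ) : ⇑(T.toEquiv ^ n) ∈ T.envelopingSemigroup :=
  subset_closure ⟨n, rfl⟩

theorem isCompact_envelopingSemigroup [CompactSpace X] :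
    IsCompact T.envelopingSemigroup :=
  isClosed_closure.isCompact

theorem comp_mem_envelopingSemigroup {f g : X → X} (hf : f ∈ T.envelopingSemigroup)
    (hg : g ∈ T.envelopingSemigroup) : f ∘ g ∈ T.envelopingSemigroup := by
  refine comp_mem_closure_of_forall_comp_mem ?_ ?_ hf hg
  · rintro _ ⟨n, rfl⟩
    exact T.continuous_toEquiv_zpow n
  · rintro _ ⟨m, rfl⟩ _ ⟨n, rfl⟩
    exact ⟨m + n, by simp only [zpow_add, Equiv.Perm.coe_mul]⟩

end Homeomorph

section Metric

variable {X : Type*} [MetricSpace X] {T : X ≃ₜ X}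

def IsProximal (T : X ≃ₜ X) (x y : X) : Prop :=
  ∀ δ > 0, ∃ n : ℤ, dist ((T.toEquiv ^ n) x) ((T.toEquiv ^ n) y) < δ

theorem IsProximal.exists_mem_envelopingSemigroup_apply_eq [CompactSpace X] {x y : X}
    (h : IsProximal T x y) : ∃ f ∈ T.envelopingSemigroup, f x = f y := by
  obtain ⟨f, hfE, hfmin⟩ := T.isCompact_envelopingSemigroup.exists_isMinOn
    ⟨_, T.zpow_mem_envelopingSemigroup 0⟩
    ((continuous_apply x).dist (continuous_apply y)).continuousOn
  refine ⟨f, hfE, eq_of_forall_dist_le fun δ hδ => ?_⟩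
  obtain ⟨n, hn⟩ := h δ hδ
  exact (hfmin (T.zpow_mem_envelopingSemigroup n)).trans hn.le

theorem IsProximal.exists_idempotent_apply_eq [CompactSpace X] {x y : X} (h : IsProximal T x y) :
    ∃ u ∈ T.envelopingSemigroup, u ∘ u = u ∧ u x = u y := by
  let : TopologicalSpace (Function.End X) := inferInstanceAs (TopologicalSpace (X → X))
  have : T2Space (Function.End X) := inferInstanceAs (T2Space (X → X))
  let F : Set (X → X) := {f | f ∈ T.envelopingSemigroup ∧ f x = f y}
  have hF : IsClosed F :=
    isClosed_closure.inter (isClosed_eq (continuous_apply x) (continuous_apply y))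
  have hmul : ∀ f ∈ F, ∀ g ∈ F, f ∘ g ∈ F := by
    rintro f ⟨hfE, -⟩ g ⟨hgE, hg⟩
    exact ⟨T.comp_mem_envelopingSemigroup hfE hgE, congrArg f hg⟩
  obtain ⟨u, ⟨huE, hu⟩, huu⟩ := exists_idempotent_in_compact_subsemigroup (M := Function.End X)
    (fun r => continuous_pi fun p => continuous_apply (r p)) F
    h.exists_mem_envelopingSemigroup_apply_eq hF.isCompact hmul
  exact ⟨u, huE, huu, hu⟩

theorem exists_zpow_near_of_mem_envelopingSemigroup {u : X → X} (hu : u ∈ T.envelopingSemigroup)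
    {a z : X} (hua : u a = z) (huz : u z = z) :
    ∀ δ > 0, ∃ m : ℤ, dist ((T.toEquiv ^ m) a) z < δ ∧ dist ((T.toEquiv ^ m) z) z < δ := by
  intro δ hδ
  have hopen : IsOpen {f : X → X | dist (f a) z < δ ∧ dist (f z) z < δ} :=
    (isOpen_lt ((continuous_apply a).dist continuous_const) continuous_const).inter
      (isOpen_lt ((continuous_apply z).dist continuous_const) continuous_const)
  obtain ⟨_, hf, m, rfl⟩ := mem_closure_iff.mp hu _ hopen (by simp [hua, huz, hδ])
  exact ⟨m, hf⟩

theorem exists_dotP_near {a z : X}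
    (h : ∀ δ > 0, ∃ m : ℤ, dist ((T.toEquiv ^ m) a) z < δ ∧ dist ((T.toEquiv ^ m) z) z < δ)
    (d : ℕ) {δ : ℝ} (hδ : 0 < δ) :
    ∃ n : Fin d → ℤ, ∀ ε ≠ vertex0 d, dist ((T.toEquiv ^ dotP n ε) a) z < δ := by
  induction d generalizing δ with
  | zero => exact ⟨0, fun ε hε => (hε (Subsingleton.elim _ _)).elim⟩
  | succ d ih =>
    obtain ⟨m, hma, hmz⟩ := h (δ / 2) (half_pos hδ)
    obtain ⟨η, hη, hcont⟩ :=
      Metric.continuous_iff.mp (T.continuous_toEquiv_zpow m) z (δ / 2) (half_pos hδ)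
    obtain ⟨n, hn⟩ := ih (lt_min hη hδ)
    refine ⟨Fin.cons m n, fun ε hε => ?_⟩
    obtain ⟨b, ε, rfl⟩ : ∃ b ε', ε = Fin.cons b ε' := ⟨_, _, (Fin.cons_self_tail ε).symm⟩
    rw [dotP_cons]
    cases b with
    | false =>
      have hε' : ε ≠ vertex0 d := by
        rintro rfl
        exact hε (vertex0_succ d).symm
      simpa using (hn ε hε').trans_le (min_le_right _ _)
    | true =>
      rw [if_pos rfl, zpow_add, Equiv.Perm.mul_apply]
      by_cases hε' : ε = vertex0 d
      · simpa [hε'] using hma.trans (half_lt_self hδ)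
      calc dist ((T.toEquiv ^ m) ((T.toEquiv ^ dotP n ε) a)) z
          ≤ dist ((T.toEquiv ^ m) ((T.toEquiv ^ dotP n ε) a)) ((T.toEquiv ^ m) z)
            + dist ((T.toEquiv ^ m) z) z := dist_triangle _ _ _
        _ < δ / 2 + δ / 2 :=
          add_lt_add (hcont _ ((hn ε hε').trans_le (min_le_left _ _))) hmz
        _ = δ := add_halves δ

theorem mem_cubeQ_of_forall_exists_zpow_near {a z : X}
    (h : ∀ δ > 0, ∃ m : ℤ, dist ((T.toEquiv ^ m) a) z < δ ∧ dist ((T.toEquiv ^ m) z) z < δ)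
    (d : ℕ) : (fun ε : Fin d → Bool => if ε = vertex0 d then a else z) ∈ cubeQ X T d := by
  refine Metric.mem_closure_iff.mpr fun δ hδ => ?_
  obtain ⟨n, hn⟩ := exists_dotP_near h d hδ
  refine ⟨fun ε => (T.toEquiv ^ dotP n ε) a, ⟨a, n, rfl⟩, (dist_pi_lt_iff hδ).mpr fun ε => ?_⟩
  by_cases hε : ε = vertex0 d
  · simpa [hε] using hδ
  · simpa [hε, dist_comm] using hn ε hε

end Metric

theorem distal_of_cubeQ_condition_general
    {X : Type*} [MetricSpace X] [CompactSpace X] (T : X ≃ₜ X) (d : ℕ)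
    (hyp : ∀ x y : X,
      (fun ε : Fin d → Bool => if ε = vertex0 d then x else y) ∈ cubeQ X T d → x = y) :
    ∀ x y : X, x ≠ y →
      ∃ δ > 0, ∀ n : ℤ, δ ≤ dist ((T.toEquiv ^ n) x) ((T.toEquiv ^ n) y) := by
  intro x y hxy
  by_contra hdistal
  have hprox : IsProximal T x y := by
    push Not at hdistal
    exact hdistal
  obtain ⟨u, huE, huu, huxy⟩ := hprox.exists_idempotent_apply_eq
  have huz : u (u x) = u x := congrFun huu x
  have hx : x = u x := hyp x (u x) (mem_cubeQ_of_forall_exists_zpow_near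
    (exists_zpow_near_of_mem_envelopingSemigroup huE rfl huz) d)
  have hy : y = u x := hyp y (u x) (mem_cubeQ_of_forall_exists_zpow_near
    (exists_zpow_near_of_mem_envelopingSemigroup huE huxy.symm huz) d)
  exact hxy (hx.trans hy.symm)

/-- If `(x,y,…,y) ∈ Q^[d]` forces `x = y` in a transitive system, then the system
is distal. -/
theorem distal_of_cubeQ_condition
    {X : Type*} [MetricSpace X] [CompactSpace X] (T : X ≃ₜ X) (d : ℕ) (hd : 1 ≤ d)
    (htrans : ∃ x : X, Dense (Set.range fun n : ℤ => (T.toEquiv ^ n) x))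
    (hyp : ∀ x y : X,
      (fun ε : Fin d → Bool => if ε = vertex0 d then x else y) ∈ cubeQ X T d → x = y) :
    ∀ x y : X, x ≠ y →
      ∃ δ > 0, ∀ n : ℤ, δ ≤ dist ((T.toEquiv ^ n) x) ((T.toEquiv ^ n) y) :=
  distal_of_cubeQ_condition_general T d hyp
end
end

section
/- Let (X,T) be a minimal distal system and d ≥ 1. Then (Q^[d](X), G^[d]) is a minimal distal system, where G^[d] is the group of transformations of X^{2^d} generated by the diagonal transformation and the face transformations. -/
open Filter Topology

noncomputable section

/-- The face transformation `T_j^[d]`. -/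
def faceT {X : Type*} (T : Equiv.Perm X) (d : ℕ) (j : Fin d) :
    Equiv.Perm ((Fin d → Bool) → X) :=
  Equiv.piCongrRight fun ε => if ε j then T else Equiv.refl X

/-- The diagonal transformation `T^[d]`. -/
def diagT {X : Type*} (T : Equiv.Perm X) (d : ℕ) :
    Equiv.Perm ((Fin d → Bool) → X) :=
  Equiv.piCongrRight fun _ => T

/-- The face group `F^[d]`. -/
def faceGroup {X : Type*} (T : Equiv.Perm X) (d : ℕ) :
    Subgroup (Equiv.Perm ((Fin d → Bool) → X)) :=
  Subgroup.closure (Set.range (faceT T d))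

/-- The parallelepiped group `G^[d]`. -/
def cubeGroup {X : Type*} (T : Equiv.Perm X) (d : ℕ) :
    Subgroup (Equiv.Perm ((Fin d → Bool) → X)) :=
  Subgroup.closure (insert (diagT T d) (Set.range (faceT T d)))

/-!
The group `G^[d]` is abelian and acts on `X^{2^d}` coordinatewise by the powers `T^{k + n·ε}`, so
it is distal because `T` is, and it leaves `Q^[d]` invariant. Since `T` is minimal, `Q^[d]` is the
orbit closure of any diagonal point. Finally, an action of a group by homeomorphisms of a compact
space that is distal has minimal orbit closures: an idempotent of the Ellis semigroup of a distal
action must be the identity, so every element `p` of the Ellis semigroup `E` has a left inverse in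
`E` (an idempotent of the compact semigroup `E ∘ p`), and a point `p y` of the orbit closure of `y`
therefore has `y` in its own orbit closure.
-/

open MulAction Pointwise

section Distal

variable {G Y : Type*} [Group G] [MetricSpace Y] [MulAction G Y]

variable (G Y) in
def IsDistal : Prop :=
  ∀ y z : Y, y ≠ z → ∃ δ > 0, ∀ g : G, δ ≤ dist (g • y) (g • z)

variable (G Y) in
def ellisSemigroup : Set (Y → Y) :=
  closure (Set.range fun (g : G) (y : Y) => g • y)

lemma isClosed_ellisSemigroup : IsClosed (ellisSemigroup G Y) :=
  isClosed_closure

lemma smul_mem_ellisSemigroup (g : G) : (g • · : Y → Y) ∈ ellisSemigroup G Y :=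
  subset_closure ⟨g, rfl⟩

lemma comp_mem_ellisSemigroup [ContinuousConstSMul G Y] {p q : Y → Y}
    (hp : p ∈ ellisSemigroup G Y) (hq : q ∈ ellisSemigroup G Y) :
    p ∘ q ∈ ellisSemigroup G Y := by
  have hsmul : ∀ g : G, (g • ·) ∘ q ∈ ellisSemigroup G Y := fun g =>
    map_mem_closure (f := fun r => (g • ·) ∘ r)
      (continuous_pi fun y => (continuous_apply y).const_smul g) hq
      (by rintro _ ⟨h, rfl⟩; exact ⟨g * h, funext fun y => mul_smul g h y⟩)
  exact isClosed_ellisSemigroup.closure_subset <|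
    map_mem_closure (f := fun r => r ∘ q) (continuous_pi fun y => continuous_apply (q y)) hp
      (by rintro _ ⟨g, rfl⟩; exact hsmul g)

lemma isCompact_ellisSemigroup [CompactSpace Y] : IsCompact (ellisSemigroup G Y) :=
  isClosed_ellisSemigroup.isCompact

lemma apply_mem_closure_orbit_of_mem_ellisSemigroup {p : Y → Y}
    (hp : p ∈ ellisSemigroup G Y) (y : Y) : p y ∈ closure (orbit G y) :=
  map_mem_closure (f := fun p : Y → Y => p y) (continuous_apply y) hp
    (by rintro _ ⟨g, rfl⟩; exact mem_orbit y g)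

lemma exists_mem_ellisSemigroup_apply_eq [CompactSpace Y] {y z : Y}
    (hz : z ∈ closure (orbit G y)) : ∃ p ∈ ellisSemigroup G Y, p y = z := by
  have hclosed : IsClosed ((fun p : Y → Y => p y) '' ellisSemigroup G Y) :=
    (isCompact_ellisSemigroup.image (continuous_apply y)).isClosed
  refine closure_minimal ?_ hclosed hz
  rintro _ ⟨g, rfl⟩
  exact ⟨_, smul_mem_ellisSemigroup g, rfl⟩

lemma exists_comp_self_eq_of_isCompact {Z : Type*} [TopologicalSpace Z] [T2Space Z]
    {K : Set (Z → Z)} (hne : K.Nonempty) (hK : IsCompact K)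
    (hcomp : ∀ p ∈ K, ∀ q ∈ K, p ∘ q ∈ K) : ∃ u ∈ K, u ∘ u = u :=
  -- `Function.End Z` is `Z → Z` with composition as its multiplication
  letI : TopologicalSpace (Function.End Z) := Pi.topologicalSpace
  haveI : T2Space (Function.End Z) := Pi.t2Space
  exists_idempotent_in_compact_subsemigroup (M := Function.End Z)
    (fun r => continuous_pi fun z => continuous_apply (r z)) K hne hK hcomp

namespace IsDistal

lemma eq_id_of_comp_self (hG : IsDistal G Y) {u : Y → Y} (hu : u ∈ ellisSemigroup G Y)
    (huu : u ∘ u = u) : u = id := by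
  funext y
  by_contra hne
  obtain ⟨δ, hδ, hsep⟩ := hG (u y) y hne
  have hclosed : IsClosed {p : Y → Y | δ ≤ dist (p (u y)) (p y)} :=
    isClosed_le continuous_const ((continuous_apply _).dist (continuous_apply _))
  have hδu : δ ≤ dist (u (u y)) (u y) :=
    closure_minimal (by rintro _ ⟨g, rfl⟩; exact hsep g) hclosed hu
  rw [show u (u y) = u y from congrFun huu y, dist_self] at hδu
  exact hδ.not_ge hδu

lemma exists_comp_eq_id [CompactSpace Y] [ContinuousConstSMul G Y] (hG : IsDistal G Y)
    {p : Y → Y} (hp : p ∈ ellisSemigroup G Y) : ∃ q ∈ ellisSemigroup G Y, q ∘ p = id := by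
  obtain ⟨_, ⟨q, hq, rfl⟩, hidem⟩ :=
    exists_comp_self_eq_of_isCompact (K := (· ∘ p) '' ellisSemigroup G Y)
      (Set.Nonempty.image _ ⟨_, smul_mem_ellisSemigroup (1 : G)⟩)
      (isCompact_ellisSemigroup.image (continuous_pi fun y => continuous_apply (p y)))
      (by
        rintro _ ⟨q₁, hq₁, rfl⟩ _ ⟨q₂, hq₂, rfl⟩
        exact ⟨q₁ ∘ p ∘ q₂, comp_mem_ellisSemigroup hq₁ (comp_mem_ellisSemigroup hp hq₂), rfl⟩)
  exact ⟨q, hq, hG.eq_id_of_comp_self (comp_mem_ellisSemigroup hq hp) hidem⟩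

lemma mem_closure_orbit_of_mem [CompactSpace Y] [ContinuousConstSMul G Y] (hG : IsDistal G Y)
    {y z : Y} (hz : z ∈ closure (orbit G y)) : y ∈ closure (orbit G z) := by
  obtain ⟨p, hp, rfl⟩ := exists_mem_ellisSemigroup_apply_eq hz
  obtain ⟨q, hq, hqp⟩ := hG.exists_comp_eq_id hp
  have hqpy : q (p y) = y := congrFun hqp y
  simpa only [hqpy] using apply_mem_closure_orbit_of_mem_ellisSemigroup hq (p y)

end IsDistal

lemma closure_orbit_subset_of_mem [ContinuousConstSMul G Y] {y z : Y}
    (hz : z ∈ closure (orbit G y)) : closure (orbit G z) ⊆ closure (orbit G y) :=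
  closure_minimal
    (by rintro _ ⟨g, rfl⟩; exact smul_closure_orbit_subset g y (Set.smul_mem_smul_set hz))
    isClosed_closure

lemma IsDistal.closure_orbit_eq_of_mem [CompactSpace Y] [ContinuousConstSMul G Y]
    (hG : IsDistal G Y) {y z : Y} (hz : z ∈ closure (orbit G y)) :
    closure (orbit G z) = closure (orbit G y) :=
  (closure_orbit_subset_of_mem hz).antisymm
    (closure_orbit_subset_of_mem (hG.mem_closure_orbit_of_mem hz))

end Distal

lemma Homeomorph.continuous_toEquiv_zpow_s5 {X : Type*} [TopologicalSpace X] (T : X ≃ₜ X) (n : ℤ) :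
    Continuous (T.toEquiv ^ n) := by
  have h : (T ^ n).toEquiv = T.toEquiv ^ n :=
    map_zpow (MonoidHom.mk' (fun h : X ≃ₜ X => h.toEquiv) fun _ _ => rfl) T n
  rw [← h]
  exact (T ^ n).continuous

lemma dotP_zero {d : ℕ} (ε : Fin d → Bool) : dotP 0 ε = 0 := by
  simp [dotP]

lemma dotP_add {d : ℕ} (m n : Fin d → ℤ) (ε : Fin d → Bool) :
    dotP (m + n) ε = dotP m ε + dotP n ε := by
  simp only [dotP, Pi.add_apply, ← Finset.sum_add_distrib]
  exact Finset.sum_congr rfl fun i _ => by split_ifs <;> simp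

lemma dotP_single {d : ℕ} (j : Fin d) (c : ℤ) (ε : Fin d → Bool) :
    dotP (Pi.single j c) ε = if ε j then c else 0 := by
  rw [dotP, Finset.sum_eq_single j (fun i _ hij => by simp [hij]) (by simp)]
  simp

section Cube

variable {X : Type*} {d : ℕ}

/-- The element `T^k ∏ⱼ (T_j^[d])^{mⱼ}` of `G^[d]`, indexed by `(k, m)`. -/
def cubeHom (T : Equiv.Perm X) (d : ℕ) :
    Multiplicative (ℤ × (Fin d → ℤ)) →* Equiv.Perm ((Fin d → Bool) → X) where
  toFun a := Equiv.piCongrRight fun ε => T ^ (a.toAdd.1 + dotP a.toAdd.2 ε)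
  map_one' := by ext; simp [dotP_zero]
  map_mul' a b := by ext z ε; simp [dotP_add, add_add_add_comm, zpow_add]

lemma cubeHom_apply (T : Equiv.Perm X) (a : Multiplicative (ℤ × (Fin d → ℤ)))
    (z : (Fin d → Bool) → X) (ε : Fin d → Bool) :
    cubeHom T d a z ε = (T ^ (a.toAdd.1 + dotP a.toAdd.2 ε)) (z ε) :=
  rfl

lemma diagT_eq_cubeHom (T : Equiv.Perm X) (d : ℕ) :
    diagT T d = cubeHom T d (.ofAdd (1, 0)) := by
  ext z ε
  simp [diagT, cubeHom_apply, dotP_zero]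

lemma faceT_eq_cubeHom (T : Equiv.Perm X) (j : Fin d) :
    faceT T d j = cubeHom T d (.ofAdd (0, Pi.single j 1)) := by
  ext z ε
  by_cases hε : ε j <;> simp [faceT, cubeHom_apply, dotP_single, hε]

lemma cubeGroup_eq_range (T : Equiv.Perm X) (d : ℕ) : cubeGroup T d = (cubeHom T d).range := by
  refine le_antisymm ?_ ?_
  · rw [cubeGroup, Subgroup.closure_le]
    rintro _ (rfl | ⟨j, rfl⟩)
    · exact ⟨_, (diagT_eq_cubeHom T d).symm⟩
    · exact ⟨_, (faceT_eq_cubeHom T j).symm⟩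
  · rintro _ ⟨a, rfl⟩
    change a ∈ (cubeGroup T d).comap (cubeHom T d)
    have hdiag : .ofAdd (1, 0) ∈ (cubeGroup T d).comap (cubeHom T d) :=
      Subgroup.mem_comap.2 <| diagT_eq_cubeHom T d ▸ Subgroup.subset_closure (Set.mem_insert _ _)
    have hface (j : Fin d) : .ofAdd (0, Pi.single j 1) ∈ (cubeGroup T d).comap (cubeHom T d) :=
      Subgroup.mem_comap.2 <|
        faceT_eq_cubeHom T j ▸ Subgroup.subset_closure (Set.mem_insert_of_mem _ ⟨j, rfl⟩)
    have hdecomp : a.toAdd = a.toAdd.1 • (1, 0) + ∑ j, a.toAdd.2 j • (0, Pi.single j 1) := by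
      ext <;> simp [Prod.fst_sum, Prod.snd_sum, Finset.sum_apply, Pi.single_apply]
    rw [← ofAdd_toAdd a, hdecomp, ofAdd_add, ofAdd_zsmul, ofAdd_sum]
    exact mul_mem (zpow_mem hdiag _) (Subgroup.prod_mem _ fun j _ => by
      rw [ofAdd_zsmul]; exact zpow_mem (hface j) _)

lemma mem_cubeGroup_iff (T : Equiv.Perm X) {S : Equiv.Perm ((Fin d → Bool) → X)} :
    S ∈ cubeGroup T d ↔ ∃ a, cubeHom T d a = S := by
  rw [cubeGroup_eq_range, MonoidHom.mem_range]

end Cube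

section CubeSpace

variable {X : Type*} [TopologicalSpace X] (T : X ≃ₜ X) (d : ℕ)

lemma continuous_cubeHom (a : Multiplicative (ℤ × (Fin d → ℤ))) :
    Continuous (cubeHom T.toEquiv d a) :=
  continuous_pi fun ε => (T.continuous_toEquiv_zpow_s5 _).comp (continuous_apply ε)

instance continuousConstSMul_cubeGroup :
    ContinuousConstSMul (cubeGroup T.toEquiv d) ((Fin d → Bool) → X) where
  continuous_const_smul S := by
    obtain ⟨a, ha⟩ := (mem_cubeGroup_iff T.toEquiv).1 S.2
    change Continuous (S : Equiv.Perm ((Fin d → Bool) → X))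
    rw [← ha]
    exact continuous_cubeHom T d a

lemma cubeHom_mapsTo_cubeQ (a : Multiplicative (ℤ × (Fin d → ℤ))) :
    Set.MapsTo (cubeHom T.toEquiv d a) (cubeQ X T d) (cubeQ X T d) := by
  refine Set.MapsTo.closure ?_ (continuous_cubeHom T d a)
  rintro _ ⟨x, n, rfl⟩
  refine ⟨(T.toEquiv ^ a.toAdd.1) x, a.toAdd.2 + n, funext fun ε => ?_⟩
  simp only [cubeHom_apply, dotP_add, ← Equiv.Perm.mul_apply, ← zpow_add]
  ring_nf

lemma const_mem_cubeQ (x : X) : (fun _ => x) ∈ cubeQ X T d :=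
  subset_closure ⟨x, 0, by simp [dotP_zero]⟩

lemma cubeQ_eq_closure_orbit (hmin : ∀ x : X, Dense (Set.range fun n : ℤ => (T.toEquiv ^ n) x))
    (x : X) : cubeQ X T d = closure (orbit (cubeGroup T.toEquiv d) (fun _ => x)) := by
  refine (closure_minimal ?_ isClosed_closure).antisymm (closure_minimal ?_ isClosed_closure)
  · rintro _ ⟨y, n, rfl⟩
    refine map_mem_closure (continuous_pi fun ε => T.continuous_toEquiv_zpow_s5 (dotP n ε))
      (hmin x y) ?_
    rintro _ ⟨k, rfl⟩
    refine ⟨⟨cubeHom T.toEquiv d (.ofAdd (k, n)), (mem_cubeGroup_iff _).2 ⟨_, rfl⟩⟩,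
      funext fun ε => ?_⟩
    simp only [Subgroup.smul_def, Equiv.Perm.smul_def, cubeHom_apply, ← Equiv.Perm.mul_apply,
      ← zpow_add, toAdd_ofAdd, add_comm]
  · rintro _ ⟨⟨S, hS⟩, rfl⟩
    obtain ⟨a, rfl⟩ := (mem_cubeGroup_iff _).1 hS
    exact cubeHom_mapsTo_cubeQ T d a (const_mem_cubeQ T d x)

end CubeSpace

lemma isDistal_cubeGroup {X : Type*} [MetricSpace X] (T : X ≃ₜ X) (d : ℕ)
    (hdistal : ∀ x y : X, x ≠ y →
      ∃ δ > 0, ∀ n : ℤ, δ ≤ dist ((T.toEquiv ^ n) x) ((T.toEquiv ^ n) y)) :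
    IsDistal (cubeGroup T.toEquiv d) ((Fin d → Bool) → X) := by
  intro z w hzw
  obtain ⟨ε, hε⟩ := Function.ne_iff.1 hzw
  obtain ⟨δ, hδ, hsep⟩ := hdistal (z ε) (w ε) hε
  refine ⟨δ, hδ, fun ⟨S, hS⟩ => ?_⟩
  obtain ⟨a, rfl⟩ := (mem_cubeGroup_iff _).1 hS
  exact (hsep _).trans (dist_le_pi_dist (cubeHom _ d a z) (cubeHom _ d a w) ε)

lemma orbit_subgroup_perm_eq {Y : Type*} (G : Subgroup (Equiv.Perm Y)) (y : Y) :
    orbit G y = {z | ∃ S ∈ G, z = S y} := by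
  ext z
  constructor
  · rintro ⟨⟨S, hS⟩, rfl⟩
    exact ⟨S, hS, rfl⟩
  · rintro ⟨S, hS, rfl⟩
    exact ⟨⟨S, hS⟩, rfl⟩

/-- For a minimal distal system, `(Q^[d], G^[d])` is a minimal distal system. -/
theorem cubeQ_minimal_distal
    {X : Type*} [MetricSpace X] [CompactSpace X] (T : X ≃ₜ X) (d : ℕ)
    (hmin : ∀ x : X, Dense (Set.range fun n : ℤ => (T.toEquiv ^ n) x))
    (hdistal : ∀ x y : X, x ≠ y →
      ∃ δ > 0, ∀ n : ℤ, δ ≤ dist ((T.toEquiv ^ n) x) ((T.toEquiv ^ n) y)) :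
    (∀ S ∈ cubeGroup T.toEquiv d, ∀ z ∈ cubeQ X T d, S z ∈ cubeQ X T d) ∧
    (∀ z ∈ cubeQ X T d,
      cubeQ X T d ⊆ closure {w | ∃ S ∈ cubeGroup T.toEquiv d, w = S z}) ∧
    (∀ z ∈ cubeQ X T d, ∀ w ∈ cubeQ X T d, z ≠ w →
      ∃ δ > 0, ∀ S ∈ cubeGroup T.toEquiv d, δ ≤ dist (S z) (S w)) := by
  have hG := isDistal_cubeGroup T d hdistal
  refine ⟨fun S hS z hz => ?_, fun z hz => ?_, fun z _ w _ hzw => ?_⟩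
  · obtain ⟨a, rfl⟩ := (mem_cubeGroup_iff _).1 hS
    exact cubeHom_mapsTo_cubeQ T d a hz
  · rw [cubeQ_eq_closure_orbit T d hmin (z (vertex0 d))] at hz ⊢
    rw [← orbit_subgroup_perm_eq, hG.closure_orbit_eq_of_mem hz]
  · obtain ⟨δ, hδ, hsep⟩ := hG z w hzw
    exact ⟨δ, hδ, fun S hS => hsep ⟨S, hS⟩⟩
end
end
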